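/- Define F₁(H,σ) := (1 − H²)·(−(9/8)(σ² + H²) − (3/4)Hσ − (1/3)(1 − H²)) and F₂(H,σ) := (9/8)σ² − (9/4)Hσ − (1/3)(1 − H²) − (15/8)H² − Hσ·(−(9/8)(σ² + H²) − (3/4)Hσ − (1/3)(1 − H²)). Then for (H,σ) ∈ ℝ², one has F₁(H,σ) = 0 and F₂(H,σ) = 0 if and only if (H,σ) is one of the six points A = (−1, 5/3), B = (−1, 1), C = (−1, −1), D = (1, −5/3), E = (1, −1), F = (1, 1). -/

import Mathlib

/-- First component of the compactified expansion-normalised vector field. -/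
noncomputable def F₁ (H σ : ℝ) : ℝ :=
  (1 - H ^ 2) * (-(9 / 8) * (σ ^ 2 + H ^ 2) - (3 / 4) * (H * σ) - (1 / 3) * (1 - H ^ 2))

/-- Second component of the compactified expansion-normalised vector field. -/
noncomputable def F₂ (H σ : ℝ) : ℝ :=
  (9 / 8) * σ ^ 2 - (9 / 4) * (H * σ) - (1 / 3) * (1 - H ^ 2) - (15 / 8) * H ^ 2
    - H * σ * (-(9 / 8) * (σ ^ 2 + H ^ 2) - (3 / 4) * (H * σ) - (1 / 3) * (1 - H ^ 2))

/-! Writing `F₁ = (1 - H²) Q` and `F₂ = R - H σ Q`, the combination `-2 Q + (2/3) R` equals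
`3 σ² + (5/9) H² + 4/9 > 0`, so `Q` and `R` have no common zero and every equilibrium lies on one
of the lines `H = ±1`. There `F₁` vanishes identically and `F₂` is a cubic in `σ` with three
rational roots. -/

lemma sq_eq_one_of_F₁_eq_zero_of_F₂_eq_zero {H σ : ℝ} (h₁ : F₁ H σ = 0) (h₂ : F₂ H σ = 0) :
    H ^ 2 = 1 := by
  rcases mul_eq_zero.mp h₁ with hH | hQ
  · linarith
  · have hpos : 0 < 3 * σ ^ 2 + 5 / 9 * H ^ 2 + 4 / 9 := by positivity
    have hzero : 3 * σ ^ 2 + 5 / 9 * H ^ 2 + 4 / 9 = 0 := by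
      unfold F₂ at h₂
      linear_combination (2 / 3) * h₂ + (2 / 3 * (H * σ) - 2) * hQ
    exact absurd hzero hpos.ne'

lemma F₁_eq_zero_of_sq_eq_one {H : ℝ} (hH : H ^ 2 = 1) (σ : ℝ) : F₁ H σ = 0 := by
  simp [F₁, hH]

lemma F₂_one_eq_zero_iff {σ : ℝ} : F₂ 1 σ = 0 ↔ σ = -5 / 3 ∨ σ = -1 ∨ σ = 1 := by
  have hfactor : F₂ 1 σ = 9 / 8 * ((σ + 5 / 3) * (σ + 1) * (σ - 1)) := by
    unfold F₂
    ring
  rw [hfactor]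
  simp only [mul_eq_zero, add_eq_zero_iff_eq_neg, sub_eq_zero]
  norm_num [or_assoc]

lemma F₂_neg_one_eq_zero_iff {σ : ℝ} : F₂ (-1) σ = 0 ↔ σ = 5 / 3 ∨ σ = 1 ∨ σ = -1 := by
  have hfactor : F₂ (-1) σ = -(9 / 8) * ((σ - 5 / 3) * (σ - 1) * (σ + 1)) := by
    unfold F₂
    ring
  rw [hfactor]
  simp only [mul_eq_zero, add_eq_zero_iff_eq_neg, sub_eq_zero]
  norm_num [or_assoc]

lemma F₁_eq_zero_and_F₂_eq_zero_iff {H σ : ℝ} :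
    F₁ H σ = 0 ∧ F₂ H σ = 0 ↔ (H = -1 ∧ F₂ (-1) σ = 0) ∨ (H = 1 ∧ F₂ 1 σ = 0) := by
  constructor
  · rintro ⟨h₁, h₂⟩
    rcases sq_eq_one_iff.mp (sq_eq_one_of_F₁_eq_zero_of_F₂_eq_zero h₁ h₂) with rfl | rfl
    exacts [Or.inr ⟨rfl, h₂⟩, Or.inl ⟨rfl, h₂⟩]
  · rintro (⟨rfl, h₂⟩ | ⟨rfl, h₂⟩) <;> exact ⟨F₁_eq_zero_of_sq_eq_one (by norm_num) σ, h₂⟩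

theorem equilibrium_points_classification (H σ : ℝ) :
    (F₁ H σ = 0 ∧ F₂ H σ = 0) ↔
      ((H, σ) = (-1, 5 / 3) ∨ (H, σ) = (-1, 1) ∨ (H, σ) = (-1, -1) ∨
       (H, σ) = (1, -5 / 3) ∨ (H, σ) = (1, -1) ∨ (H, σ) = (1, 1)) := by
  rw [F₁_eq_zero_and_F₂_eq_zero_iff, F₂_neg_one_eq_zero_iff, F₂_one_eq_zero_iff]
  simp only [Prod.mk.injEq]
  tauto
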